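/- arXiv:2409.01079 — 5 statements merged into one kernel-verified Lean document; each statement's English description precedes it below -/
import Mathlib

section
/- Every infinite situation-fair firing sequence of a finite safe Petri net eventually enters an attractor and stays there: there exists an attractor A (terminal strongly connected component of the reachability graph) and an index k such that all markings M_{k+i} for i ≥ 0 belong to A. -/
/-- A Petri net: places `P`, transitions `T`, pre/post sets and initial marking. -/
structure PetriNet (P T : Type) where
  pre : T → Set P
  post : T → Set P
  M0 : P → ℕ

variable {P T : Type}

/-- A transition `t` is enabled at marking `M` if all its preconditions hold a token. -/
def PetriNet.enabled (N : PetriNet P T) (M : P → ℕ) (t : T) : Prop :=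
  ∀ p ∈ N.pre t, 1 ≤ M p

open Classical in
/-- Firing `t` at `M`. -/
noncomputable def PetriNet.fire (N : PetriNet P T) (M : P → ℕ) (t : T) : P → ℕ :=
  fun p => M p - (if p ∈ N.pre t then 1 else 0) + (if p ∈ N.post t then 1 else 0)

/-- One firing step. -/
def PetriNet.step (N : PetriNet P T) (M M' : P → ℕ) : Prop :=
  ∃ t, N.enabled M t ∧ N.fire M t = M'

/-- Reachability via finite firing sequences. -/
def PetriNet.reach (N : PetriNet P T) : (P → ℕ) → (P → ℕ) → Prop :=
  Relation.ReflTransGen N.step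

/-- Markings reachable from the initial marking. -/
def PetriNet.reachable (N : PetriNet P T) (M : P → ℕ) : Prop :=
  N.reach N.M0 M

/-- Safety: every reachable marking puts at most one token on each place. -/
def PetriNet.Safe (N : PetriNet P T) : Prop :=
  ∀ M, N.reachable M → ∀ p, M p ≤ 1

/-- An infinite firing sequence (markings `Ms`, transitions `ts`, with
`Ms i —ts i→ Ms (i+1)`) is situation-fair iff every transition enabled at a marking
visited infinitely often also fires from that marking infinitely often. -/
def SitFair (N : PetriNet P T) (Ms : ℕ → P → ℕ) (ts : ℕ → T) : Prop :=
  ∀ (t : T) (M : P → ℕ), N.enabled M t →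
    {i | Ms i = M}.Infinite → {j | Ms j = M ∧ ts j = t}.Infinite

/-- An attractor: a nonempty terminal strongly connected component of the
reachability graph. -/
def IsAttractor (N : PetriNet P T) (A : Set (P → ℕ)) : Prop :=
  A.Nonempty ∧ (∀ M ∈ A, N.reachable M) ∧
    (∀ M ∈ A, ∀ M' ∈ A, N.reach M M') ∧
    (∀ M ∈ A, ∀ M', N.reach M M' → M' ∈ A)

/-- Every infinite situation-fair execution of a finite safe Petri net eventually
enters an attractor and stays there. -/
theorem sitfair_reaches_attractor (N : PetriNet P T) [Fintype P] (hsafe : N.Safe)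
    (Ms : ℕ → P → ℕ) (ts : ℕ → T) (h0 : Ms 0 = N.M0)
    (hstep : ∀ i, N.enabled (Ms i) (ts i) ∧ N.fire (Ms i) (ts i) = Ms (i + 1))
    (hfair : SitFair N Ms ts) :
    ∃ (A : Set (P → ℕ)) (k : ℕ), IsAttractor N A ∧ ∀ i, Ms (k + i) ∈ A := by

  classical
  have hreach : ∀ i, N.reachable (Ms i) := by
    intro i
    induction i with
    | zero => rw [h0]; exact Relation.ReflTransGen.refl
    | succ n ih =>
      exact Relation.ReflTransGen.tail ih ⟨ts n, (hstep n).1, (hstep n).2⟩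
  have hreach2 : ∀ i j, i ≤ j → N.reach (Ms i) (Ms j) := by
    intro i j hij
    induction j, hij using Nat.le_induction with
    | base => exact Relation.ReflTransGen.refl
    | succ n _ ih => exact ih.tail ⟨ts n, (hstep n).1, (hstep n).2⟩
  set A : Set (P → ℕ) := {M | ({i | Ms i = M}).Infinite} with hA
  -- finiteness of safe markings
  have hfinS : ({g : P → ℕ | ∀ p, g p ≤ 1}).Finite := by
    have : Finite ({g : P → ℕ | ∀ p, g p ≤ 1} : Set (P → ℕ)) := by
      apply Finite.of_injective
        (fun g => (fun p => (⟨g.1 p, Nat.lt_succ_of_le (g.2 p)⟩ : Fin 2)))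
      intro a b hab
      apply Subtype.ext
      funext p
      exact congrArg Fin.val (congrFun hab p)
    exact Set.toFinite _
  have hVfin : (Set.range Ms).Finite := by
    apply hfinS.subset
    rintro _ ⟨i, rfl⟩ p
    exact hsafe _ (hreach i) p
  have hBfin : {i | Ms i ∉ A}.Finite := by
    have hsub : {i | Ms i ∉ A} ⊆ ⋃ M ∈ (Set.range Ms ∩ Aᶜ), {i | Ms i = M} := by
      intro i hi
      exact Set.mem_biUnion ⟨⟨i, rfl⟩, hi⟩ rfl
    refine Set.Finite.subset (Set.Finite.biUnion (hVfin.inter_of_left _) ?_) hsub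
    intro M hM
    exact Set.not_infinite.mp hM.2
  obtain ⟨b, hb⟩ := hBfin.bddAbove
  have htail : ∀ i, Ms (b + 1 + i) ∈ A := by
    intro i
    by_contra hc
    have := hb hc
    omega
  -- terminality: A is closed under single steps
  have hterm1 : ∀ M ∈ A, ∀ M', N.step M M' → M' ∈ A := by
    rintro M hM M' ⟨t, ht, hf⟩
    have hJ := hfair t M ht hM
    have himg : ((· + 1) '' {j | Ms j = M ∧ ts j = t}) ⊆ {i | Ms i = M'} := by
      rintro _ ⟨j, ⟨hj1, hj2⟩, rfl⟩
      show Ms (j + 1) = M'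
      rw [← (hstep j).2, hj1, hj2, hf]
    exact Set.Infinite.mono himg
      (hJ.image (Function.Injective.injOn (fun a b h => by omega)))
  have hterm : ∀ M ∈ A, ∀ M', N.reach M M' → M' ∈ A := by
    intro M hM M' hMM'
    induction hMM' with
    | refl => exact hM
    | tail _ hstep' ih => exact hterm1 _ ih _ hstep'
  refine ⟨A, b + 1, ⟨⟨Ms (b + 1), htail 0⟩, ?_, ?_, hterm⟩, htail⟩
  · intro M hM
    obtain ⟨i, hi⟩ := hM.nonempty
    rw [← hi]; exact hreach i
  · intro M hM M' hM'
    obtain ⟨i, hi⟩ := hM.nonempty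
    obtain ⟨j, hj, hij⟩ := hM'.exists_gt i
    rw [← hi, ← hj]
    exact hreach2 i j hij.le
end

section
/- If a marking M is visited infinitely often by an infinite situation-fair execution of a safe Petri net, then every marking reachable from M is also visited infinitely often by that execution. -/
variable {P T : Type}

/-- In an infinite situation-fair execution, every marking reachable from a marking
visited infinitely often is itself visited infinitely often. -/
theorem sitfair_reach_infinitely_often (N : PetriNet P T) (hsafe : N.Safe)
    (Ms : ℕ → P → ℕ) (ts : ℕ → T) (h0 : Ms 0 = N.M0)
    (hstep : ∀ i, N.enabled (Ms i) (ts i) ∧ N.fire (Ms i) (ts i) = Ms (i + 1))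
    (hfair : SitFair N Ms ts)
    (M : P → ℕ) (hM : {i | Ms i = M}.Infinite)
    (M' : P → ℕ) (hM' : N.reach M M') :
    {i | Ms i = M'}.Infinite := by
  induction hM' with
  | refl => exact hM
  | tail hab hbc ih =>
    rename_i b c
    obtain ⟨t, hen, hfire⟩ := hbc
    have hS := hfair t b hen ih
    have himg : (fun j => j + 1) '' {j | Ms j = b ∧ ts j = t} ⊆ {i | Ms i = c} := by
      rintro i ⟨j, ⟨hjb, hjt⟩, rfl⟩
      have h2 := (hstep j).2
      simp only [Set.mem_setOf_eq]
      rw [← h2, hjb, hjt, hfire]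
    exact Set.Infinite.mono himg (hS.image (fun a _ b _ h => by omega))
end

section
/- The round-robin firing policy produces a situation-fair execution: if from each marking M with enabled transitions {t_0, …, t_{n−1}} (in a fixed order) the k-th visit to M fires transition t_{k mod n}, then the resulting (finite or infinite) firing sequence is situation-fair. -/
variable {P T : Type}

open Classical in
/-- The sorted list of transitions enabled at marking `M`. -/
noncomputable def enabledList (N : PetriNet P T) [Fintype T] [LinearOrder T]
    (M : P → ℕ) : List T :=
  (Finset.univ.filter (fun t => N.enabled M t)).sort (· ≤ ·)

open Classical in
/-- The number of visits to marking `Ms j` strictly before time `j`. -/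
noncomputable def visits (Ms : ℕ → P → ℕ) (j : ℕ) : ℕ :=
  ((Finset.range j).filter (fun i => Ms i = Ms j)).card

/-- The round-robin firing policy (at the k-th visit to a marking, fire the
(k mod n)-th of its n enabled transitions) yields a situation-fair execution. -/
theorem roundRobin_sitFair (N : PetriNet P T) [Fintype T] [LinearOrder T]
    [Inhabited T] (Ms : ℕ → P → ℕ) (ts : ℕ → T) (h0 : Ms 0 = N.M0)
    (hstep : ∀ i, N.enabled (Ms i) (ts i) ∧ N.fire (Ms i) (ts i) = Ms (i + 1))
    (hRR : ∀ j, ts j =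
      (enabledList N (Ms j)).getD (visits Ms j % (enabledList N (Ms j)).length)
        default) :
    SitFair N Ms ts := by
  classical
  intro t M ht hinf
  set p : ℕ → Prop := fun i => Ms i = M with hp
  have hpinf : {i | p i}.Infinite := hinf
  set L := enabledList N M with hL
  have htL : t ∈ L := by
    simp only [hL, enabledList, Finset.mem_sort, Finset.mem_filter, Finset.mem_univ, true_and]
    exact ht
  set n := L.length with hn
  set k := L.idxOf t with hk
  have hkn : k < n := List.idxOf_lt_length_iff.mpr htL
  have hnpos : 0 < n := (Nat.zero_le k).trans_lt hkn
  -- the map q ↦ nth p (k + n*q) lands in the target set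
  have key : ∀ q : ℕ, Nat.nth p (k + n * q) ∈ {j | Ms j = M ∧ ts j = t} := by
    intro q
    set j := Nat.nth p (k + n * q) with hj
    have hjM : Ms j = M := Nat.nth_mem_of_infinite hpinf (k + n * q)
    have hcount : Nat.count p j = k + n * q := Nat.count_nth_of_infinite hpinf _
    have hv : visits Ms j = k + n * q := by
      rw [← hcount, Nat.count_eq_card_filter_range]
      unfold visits
      congr 1
      apply Finset.filter_congr
      intro i _
      simp [hjM, hp]
    refine ⟨hjM, ?_⟩
    have := hRR j
    rw [hjM] at this
    rw [this, hv, ← hL, ← hn]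
    have hmod : (k + n * q) % n = k := by
      simp [Nat.add_mul_mod_self_left, Nat.mod_eq_of_lt hkn]
    rw [hmod]
    rw [List.getD_eq_getElem _ _ (by rw [← hn]; exact hkn)]
    exact List.getElem_idxOf hkn
  exact Set.infinite_of_injective_forall_mem
    (f := fun q : ℕ => Nat.nth p (k + n * q))
    (fun a b hab => Nat.eq_of_mul_eq_mul_left hnpos
      (by have := (Nat.nth_injective hpinf) hab; omega)) key
end

section
/- Shaving preserves maximal runs: if C is a finite configuration and e is an unchallenged event in the crest of C, then C' := C \ {e} is a finite configuration and the set of maximal runs containing C equals the set of maximal runs containing C'. -/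
/-- An occurrence-net-like structure: conditions `B`, events `E`, and the
pre/post conditions of each event. -/
structure OccNet (B E : Type) where
  pre : E → Set B
  post : E → Set B

variable {B E : Type}

namespace OccNet

/-- Immediate causality: some condition produced by `e` is consumed by `e'`. -/
def imm (N : OccNet B E) (e e' : E) : Prop :=
  (N.post e ∩ N.pre e').Nonempty

/-- Causality `<`: nonempty path of arcs from `e` to `e'`. -/
def lt (N : OccNet B E) : E → E → Prop :=
  Relation.TransGen N.imm

/-- `e ≤ e'`. -/
def le (N : OccNet B E) (e e' : E) : Prop :=
  N.lt e e' ∨ e = e'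

/-- Direct conflict: two distinct events sharing a precondition. -/
def dircf (N : OccNet B E) (e e' : E) : Prop :=
  e ≠ e' ∧ (N.pre e ∩ N.pre e').Nonempty

/-- Conflict: causal predecessors in direct conflict. -/
def conflict (N : OccNet B E) (x y : E) : Prop :=
  ∃ u v, N.le u x ∧ N.le v y ∧ N.dircf u v

/-- The defining properties of an occurrence net: well-founded causality, each
condition produced by at most one event, no self-conflict, finite causal pasts. -/
def IsOccurrence (N : OccNet B E) : Prop :=
  WellFounded N.lt ∧
    (∀ b : B, ∀ e e' : E, b ∈ N.post e → b ∈ N.post e' → e = e') ∧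
    (∀ e : E, ¬ N.conflict e e) ∧
    (∀ e : E, {e' | N.lt e' e}.Finite)

/-- A configuration: a causally closed, conflict-free set of events. -/
def Config (N : OccNet B E) (C : Set E) : Prop :=
  (∀ e ∈ C, ∀ e', N.lt e' e → e' ∈ C) ∧
    (∀ e ∈ C, ∀ e' ∈ C, ¬ N.conflict e e')

/-- The cone `⌈e⌉` of an event. -/
def cone (N : OccNet B E) (e : E) : Set E :=
  {e' | N.le e' e}

/-- The crest of a configuration: its `<`-maximal events. -/
def crest (N : OccNet B E) (C : Set E) : Set E :=
  {e ∈ C | ∀ e' ∈ C, ¬ N.lt e e'}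

end OccNet

namespace OccNet

/-- A maximal run: a configuration maximal w.r.t. set inclusion. -/
def MaxRun (N : OccNet B E) (ω : Set E) : Prop :=
  N.Config ω ∧ ∀ C, N.Config C → ω ⊆ C → C = ω

/-- A configuration is doomed (w.r.t. a set `Bad` of bad finite configurations)
iff every maximal run extending it contains a bad configuration. -/
def Doomed (N : OccNet B E) (Bad : Set (Set E)) (C : Set E) : Prop :=
  ∀ ω, N.MaxRun ω → C ⊆ ω → ∃ C', C' ∈ Bad ∧ C' ⊆ ω

/-- `Bad` is upward closed among finite configurations. -/
def UpClosed (N : OccNet B E) (Bad : Set (Set E)) : Prop :=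
  ∀ C1 ∈ Bad, ∀ C2, N.Config C2 → C2.Finite → C1 ⊆ C2 → C2 ∈ Bad

/-- Minimally doomed: doomed, and no proper sub-configuration is doomed. -/
def MinDoomed (N : OccNet B E) (Bad : Set (Set E)) (C : Set E) : Prop :=
  N.Doomed Bad C ∧ ∀ C', N.Config C' → C' ⊂ C → ¬ N.Doomed Bad C'

/-- An event is unchallenged iff no other event shares one of its preconditions. -/
def Unchallenged (N : OccNet B E) (e : E) : Prop :=
  ∀ e', e' ≠ e → N.pre e ∩ N.pre e' = ∅

end OccNet

/-- Shaving an unchallenged crest event preserves configuration-hood and the set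
of maximal runs extending the configuration. -/
theorem shave_preserves_runs (N : OccNet B E) (hN : N.IsOccurrence)
    (C : Set E) (hC : N.Config C) (hCf : C.Finite)
    (e : E) (he : e ∈ N.crest C) (hu : N.Unchallenged e) :
    (N.Config (C \ {e}) ∧ (C \ {e}).Finite) ∧
      {ω | N.MaxRun ω ∧ C ⊆ ω} = {ω | N.MaxRun ω ∧ C \ {e} ⊆ ω} := by

  obtain ⟨heC, hcrest⟩ := he
  have hirr : ∀ a, ¬ N.lt a a := fun a ha => (WellFounded.isIrrefl hN.1).irrefl a ha
  constructor
  · constructor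
    · constructor
      · intro x hx y hy
        have hyC : y ∈ C := hC.1 x hx.1 y hy
        refine ⟨hyC, ?_⟩
        intro hye
        rw [Set.mem_singleton_iff] at hye
        subst hye
        exact hcrest x hx.1 hy
      · intro x hx y hy
        exact hC.2 x hx.1 y hy.1
    · exact hCf.diff
  · ext ω
    simp only [Set.mem_setOf_eq]
    constructor
    · rintro ⟨hω, hsub⟩
      exact ⟨hω, fun x hx => hsub hx.1⟩
    · rintro ⟨hω, hsub⟩
      refine ⟨hω, ?_⟩
      have huω : ∀ u, N.lt u e → u ∈ ω := by
        intro u hu'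
        refine hsub ⟨hC.1 e heC u hu', ?_⟩
        intro hue
        rw [Set.mem_singleton_iff] at hue
        exact hirr e (hue ▸ hu')
      have memω : ∀ z ∈ insert e ω, ∀ u, N.le u z → u = e ∨ u ∈ ω := by
        intro z hz u hle
        rcases Set.mem_insert_iff.mp hz with hze | hz
        · subst hze
          rcases hle with h | rfl
          · exact Or.inr (huω u h)
          · exact Or.inl rfl
        · rcases hle with h | rfl
          · exact Or.inr (hω.1.1 z hz u h)
          · exact Or.inr hz
      have hconfig : N.Config (insert e ω) := by
        constructor
        · intro x hx y hy
          rcases hx with rfl | hx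
          · exact Or.inr (huω y hy)
          · exact Or.inr (hω.1.1 x hx y hy)
        · intro x hx y hy hconf
          obtain ⟨u, v, hux, hvy, huv, hne⟩ := hconf
          by_cases hue : u = e
          · by_cases hve : v = e
            · subst hue; subst hve; exact huv rfl
            · subst hue
              rw [hu v hve] at hne
              exact hne.ne_empty rfl
          · by_cases hve : v = e
            · subst hve
              rw [Set.inter_comm, hu u hue] at hne
              exact hne.ne_empty rfl
            · have huω' : u ∈ ω := (memω x hx u hux).resolve_left hue
              have hvω' : v ∈ ω := (memω y hy v hvy).resolve_left hve
              exact hω.1.2 u huω' v hvω' ⟨u, v, Or.inr rfl, Or.inr rfl, huv, hne⟩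
      have heq : insert e ω = ω := hω.2 (insert e ω) hconfig (Set.subset_insert e ω)
      have heω : e ∈ ω := heq ▸ Set.mem_insert e ω
      intro x hx
      by_cases hxe : x = e
      · subst hxe; exact heω
      · exact hsub ⟨hx, hxe⟩
end

section
/- If C is a finite configuration and e ∈ crest(C) is unchallenged, then C is doomed if and only if C \ {e} is doomed; consequently, a minimally doomed configuration has no unchallenged events in its crest (it is shaved). -/
variable {B E : Type}

/-- Removing an unchallenged crest event does not change doomedness; hence a
minimally doomed configuration is shaved (no unchallenged events in its crest). -/
theorem doomed_shave_iff (N : OccNet B E) (hN : N.IsOccurrence)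
    (Bad : Set (Set E)) (hBad : N.UpClosed Bad)
    (C : Set E) (hC : N.Config C) (hCf : C.Finite) :
    (∀ e ∈ N.crest C, N.Unchallenged e →
        (N.Doomed Bad C ↔ N.Doomed Bad (C \ {e}))) ∧
      (N.MinDoomed Bad C → ∀ e ∈ N.crest C, ¬ N.Unchallenged e) := by

  have hirr : ∀ x : E, ¬ N.lt x x := fun x h => (hN.1.isIrrefl).irrefl x h
  have key : ∀ e ∈ N.crest C, N.Unchallenged e →
      (N.Doomed Bad C ↔ N.Doomed Bad (C \ {e})) := by
    intro e he hu
    constructor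
    · intro hD ω hω hsub
      have heω : e ∈ ω := by
        by_contra heω
        have hcfg : N.Config (insert e ω) := by
          constructor
          · intro x hx y hy
            rcases hx with hx | hx
            · subst hx
              have hyC : y ∈ C := hC.1 x he.1 y hy
              have hyne : y ≠ x := fun h => hirr x (h ▸ hy)
              exact Or.inr (hsub ⟨hyC, hyne⟩)
            · exact Or.inr (hω.1.1 x hx y hy)
          · intro x hx y hy hconf
            rcases hx with hx | hx
            · subst hx
              rcases hy with hy | hy
              · exact hN.2.2.1 x (hy ▸ hconf)
              · obtain ⟨u, v, hux, hvy, hd⟩ := hconf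
                rcases hux with hux | hux
                · have huC : u ∈ C := hC.1 x he.1 u hux
                  have hune : u ≠ x := fun h => hirr x (h ▸ hux)
                  exact hω.1.2 u (hsub ⟨huC, hune⟩) y hy ⟨u, v, Or.inr rfl, hvy, hd⟩
                · subst hux
                  exact hd.2.ne_empty (hu v (Ne.symm hd.1))
            · rcases hy with hy | hy
              · subst hy
                obtain ⟨u, v, hux, hvy, hd⟩ := hconf
                rcases hvy with hvy | hvy
                · have hvC : v ∈ C := hC.1 y he.1 v hvy
                  have hvne : v ≠ y := fun h => hirr y (h ▸ hvy)
                  exact hω.1.2 x hx v (hsub ⟨hvC, hvne⟩) ⟨u, v, hux, Or.inr rfl, hd⟩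
                · subst hvy
                  have := hu u hd.1
                  rw [Set.inter_comm] at this
                  exact hd.2.ne_empty this
              · exact hω.1.2 x hx y hy hconf
        have heq := hω.2 _ hcfg (Set.subset_insert e ω)
        exact heω (heq ▸ Set.mem_insert e ω)
      have hCω : C ⊆ ω := by
        intro x hx
        by_cases hxe : x = e
        · exact hxe ▸ heω
        · exact hsub ⟨hx, hxe⟩
      exact hD ω hω hCω
    · intro hD ω hω hsub
      exact hD ω hω (fun x hx => hsub hx.1)
  refine ⟨key, ?_⟩
  intro hMD e he hu
  have hcfg : N.Config (C \ {e}) := by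
    constructor
    · intro x hx y hy
      have hyC : y ∈ C := hC.1 x hx.1 y hy
      refine ⟨hyC, ?_⟩
      intro h
      have h' : y = e := h
      exact he.2 x hx.1 (h' ▸ hy)
    · intro x hx y hy hconf
      exact hC.2 x hx.1 y hy.1 hconf
  have hss : C \ {e} ⊂ C := Set.diff_singleton_ssubset.2 he.1
  exact hMD.2 (C \ {e}) hcfg hss ((key e he hu).mp hMD.1)
end
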